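/- Let F be an Orlicz function with the Δ₂-condition such that for suitable constants C₂ > Δ, C₃ > 1 and r > 0 and all 0 < x ≤ 1, Φ₊^∞(x, C₂) ≤ C₃ x^{−r} (counting disjoint intervals [a_k,b_k] ⊂ [1,∞) with F_{b_k}(x) ≥ C₂ F_{a_k}(x)). Then for every integer m > r there exist constants C₆ and 0 < α < 1 such that Φ₊^∞(x, Δ·C₂^m) and in fact Φ₊^∞(x, C₂^m) ≤ C₆ x^{−α} for all 0 < x ≤ 1. -/

import Mathlib

/-!
Put `ξ = x ^ (1 / m)`. Since `F_t(ξ ^ m) = ∏_{j < m} F_{t ξ ^ j}(ξ)`, every jump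
`F_b(x) ≥ C₂ ^ m F_a(x)` contains, for some `j < m`, a jump `F_{b ξ ^ j}(ξ) ≥ C₂ F_{a ξ ^ j}(ξ)`.
If `a ≥ 1 / x`, the rescaled intervals `[a ξ ^ j, b ξ ^ j]` still form a chain in `[1, ∞)`, so for
each `j` there are at most `C₃ ξ ^ (-r) = C₃ x ^ (-r / m)` of them. The remaining intervals are few:
by the Δ₂-condition a jump of size `C₂ ^ m > Δ` forces `b > 2 a`, so their left endpoints grow
geometrically below `1 / x` and there are at most `log₂ (1 / x) + 1` of them. Hence
`n ≤ m C₃ x ^ (-r / m) + log₂ (1 / x) + 1 ≤ C₆ x ^ (-α)` for any `r / m < α < 1`.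
-/

open Set

/-- `F_t(x) = F(tx)/F(t)`. -/
noncomputable def Ft (F : ℝ → ℝ) (t x : ℝ) : ℝ := F (t * x) / F t

/-- A chain `1 ≤ a₁ < b₁ ≤ a₂ < b₂ ≤ ⋯ ≤ a_n < b_n`. -/
def OrlChain (a b : ℕ → ℝ) (n : ℕ) : Prop :=
  (∀ k < n, 1 ≤ a k ∧ a k < b k) ∧ ∀ k, k + 1 < n → b k ≤ a (k + 1)

open Finset Real

namespace OrlChain

variable {a b : ℕ → ℝ} {n : ℕ}

lemma right_le_left (h : OrlChain a b n) {k l : ℕ} (hkl : k < l) (hl : l < n) : b k ≤ a l := by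
  induction l, hkl using Nat.le_induction with
  | base => exact h.2 k hl
  | succ l hkl ih => linarith [ih (by omega), (h.1 l (by omega)).2, h.2 l hl]

lemma two_pow_le (h : OrlChain a b n) (hdbl : ∀ k < n, 2 * a k < b k) {k : ℕ} (hk : k < n) :
    (2 : ℝ) ^ k ≤ a k := by
  induction k with
  | zero => simpa using (h.1 0 hk).1
  | succ k ih => linarith [ih (by omega), hdbl k (by omega), h.2 k hk, pow_succ (2 : ℝ) k]

lemma length_le_logb (h : OrlChain a b n) (hdbl : ∀ k < n, 2 * a k < b k) {M : ℝ} (hM : 1 ≤ M)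
    (haM : ∀ k < n, a k < M) : (n : ℝ) ≤ logb 2 M + 1 := by
  rcases n.eq_zero_or_pos with rfl | hn
  · simpa using (logb_nonneg one_lt_two hM).trans (le_add_of_nonneg_right zero_le_one)
  · have hlog : ((n - 1 : ℕ) : ℝ) ≤ logb 2 M := by
      rw [le_logb_iff_rpow_le one_lt_two (by linarith), rpow_natCast]
      exact (h.two_pow_le hdbl (by omega)).trans (haM _ (by omega)).le
    rw [Nat.cast_sub hn, Nat.cast_one] at hlog
    linarith

lemma exists_of_finset {J : ℝ → ℝ → Prop} (S : Finset ℕ)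
    (hab : ∀ k ∈ S, 1 ≤ a k ∧ a k < b k) (hba : ∀ k ∈ S, ∀ l ∈ S, k < l → b k ≤ a l)
    (hJ : ∀ k ∈ S, J (a k) (b k)) :
    ∃ a' b' : ℕ → ℝ, OrlChain a' b' #S ∧ ∀ k < #S, J (a' k) (b' k) := by
  have hf := S.finite_toSet
  have hcard : hf.toFinset = S := S.finite_toSet_toFinset
  have hmem : ∀ k < #S, Nat.nth (· ∈ S) k ∈ S := fun k hk =>
    Nat.nth_mem_of_lt_card hf (by rwa [hcard])
  refine ⟨fun k => a (Nat.nth (· ∈ S) k), fun k => b (Nat.nth (· ∈ S) k),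
    ⟨fun k hk => hab _ (hmem k hk), fun k hk => ?_⟩, fun k hk => hJ _ (hmem k hk)⟩
  exact hba _ (hmem k (by omega)) _ (hmem _ hk)
    (Nat.nth_lt_nth_of_lt_card hf k.lt_succ_self (by rwa [hcard]))

lemma card_le_of_rescale (h : OrlChain a b n) {J : ℝ → ℝ → Prop} {N : ℝ}
    (hN : ∀ n' a' b', OrlChain a' b' n' → (∀ k < n', J (a' k) (b' k)) → (n' : ℝ) ≤ N)
    {s : ℝ} (hs : 0 < s) (S : Finset ℕ)
    (hS : ∀ k ∈ S, k < n ∧ 1 ≤ a k * s ∧ J (a k * s) (b k * s)) : (#S : ℝ) ≤ N := by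
  obtain ⟨a', b', h', hJ'⟩ := exists_of_finset (a := (a · * s)) (b := (b · * s)) S
    (fun k hk => ⟨(hS k hk).2.1, mul_lt_mul_of_pos_right (h.1 k (hS k hk).1).2 hs⟩)
    (fun k _ l hl hkl => mul_le_mul_of_nonneg_right (h.right_le_left hkl (hS l hl).1) hs.le)
    (fun k hk => (hS k hk).2.2)
  exact hN _ _ _ h' hJ'

end OrlChain

section Jumps

variable {F : ℝ → ℝ}

lemma pos_of_strictMonoOn (hF0 : F 0 = 0) (hmono : StrictMonoOn F (Ici 0)) {s : ℝ} (hs : 0 < s) :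
    0 < F s :=
  hF0 ▸ hmono self_mem_Ici hs.le hs

lemma Ft_pos (hpos : ∀ s, 0 < s → 0 < F s) {t x : ℝ} (ht : 0 < t) (hx : 0 < x) : 0 < Ft F t x :=
  div_pos (hpos _ (mul_pos ht hx)) (hpos t ht)

lemma one_lt_of_doubling (hpos : ∀ s, 0 < s → 0 < F s) (hmono : StrictMonoOn F (Ici 0)) {Δ : ℝ}
    (hΔ : ∀ x ≥ (0 : ℝ), F (2 * x) ≤ Δ * F x) : 1 < Δ := by
  have h12 : F 1 < F 2 := hmono (by norm_num) (by norm_num) one_lt_two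
  have h2 := hΔ 1 zero_le_one
  rw [mul_one] at h2
  nlinarith [hpos 1 one_pos]

lemma Ft_le_mul_of_le_two_mul (hpos : ∀ s, 0 < s → 0 < F s) (hmono : MonotoneOn F (Ici 0))
    {Δ : ℝ} (hΔ : ∀ x ≥ (0 : ℝ), F (2 * x) ≤ Δ * F x) {t t' x : ℝ} (ht : 0 < t) (hx : 0 < x)
    (htt' : t ≤ t') (ht' : t' ≤ 2 * t) : Ft F t' x ≤ Δ * Ft F t x := by
  have ht'0 : 0 < t' := ht.trans_le htt'
  have hnum : F (t' * x) ≤ Δ * F (t * x) :=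
    (hmono (mem_Ici.2 (by positivity)) (mem_Ici.2 (by positivity)) (by nlinarith)).trans
      (hΔ _ (by positivity))
  have hden : F t ≤ F t' := hmono (mem_Ici.2 ht.le) (mem_Ici.2 ht'0.le) htt'
  calc Ft F t' x ≤ Δ * F (t * x) / F t :=
        div_le_div₀ ((hpos _ (by positivity)).le.trans hnum) hnum (hpos t ht) hden
    _ = Δ * Ft F t x := mul_div_assoc _ _ _

lemma two_mul_lt_of_jump (hpos : ∀ s, 0 < s → 0 < F s) (hmono : MonotoneOn F (Ici 0))
    {Δ C : ℝ} (hΔ : ∀ x ≥ (0 : ℝ), F (2 * x) ≤ Δ * F x) (hΔC : Δ < C) {s t x : ℝ} (hs : 0 < s)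
    (hx : 0 < x) (hst : s ≤ t) (hjump : C * Ft F s x ≤ Ft F t x) : 2 * s < t := by
  by_contra! h2
  nlinarith [Ft_le_mul_of_le_two_mul hpos hmono hΔ hs hx hst h2, Ft_pos hpos hs hx]

lemma prod_Ft_geom (hpos : ∀ s, 0 < s → 0 < F s) {t ξ : ℝ} (ht : 0 < t) (hξ : 0 < ξ) (m : ℕ) :
    ∏ j ∈ range m, Ft F (t * ξ ^ j) ξ = Ft F t (ξ ^ m) := by
  induction m with
  | zero => simp [Ft, (hpos t ht).ne']
  | succ m ih =>
    have h1 := (hpos t ht).ne'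
    have h2 := (hpos (t * ξ ^ m) (by positivity)).ne'
    rw [prod_range_succ, ih]
    simp only [Ft, pow_succ, ← mul_assoc]
    field_simp

lemma exists_Ft_jump_of_pow (hpos : ∀ s, 0 < s → 0 < F s) {m : ℕ} (hm : m ≠ 0) {C u v ξ : ℝ}
    (hu : 0 < u) (hv : 0 < v) (hξ : 0 < ξ) (hjump : C ^ m * Ft F u (ξ ^ m) ≤ Ft F v (ξ ^ m)) :
    ∃ j < m, C * Ft F (u * ξ ^ j) ξ ≤ Ft F (v * ξ ^ j) ξ := by
  by_contra! hlt
  have hprod : ∏ j ∈ range m, Ft F (v * ξ ^ j) ξ < ∏ j ∈ range m, C * Ft F (u * ξ ^ j) ξ :=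
    prod_lt_prod_of_nonempty (fun j _ => Ft_pos hpos (by positivity) hξ)
      (fun j hj => hlt j (mem_range.mp hj)) (nonempty_range_iff.mpr hm)
  rw [prod_mul_distrib, prod_const, card_range, prod_Ft_geom hpos hu hξ,
    prod_Ft_geom hpos hv hξ] at hprod
  exact hprod.not_ge hjump

lemma card_filter_lt_le_logb (hpos : ∀ s, 0 < s → 0 < F s) (hmono : MonotoneOn F (Ici 0))
    {Δ C : ℝ} (hΔ : ∀ x ≥ (0 : ℝ), F (2 * x) ≤ Δ * F x) (hΔC : Δ < C) {x M : ℝ} (hx : 0 < x)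
    (hM : 1 ≤ M) {n : ℕ} {a b : ℕ → ℝ} (h : OrlChain a b n)
    (hjump : ∀ k < n, C * Ft F (a k) x ≤ Ft F (b k) x) :
    (#{k ∈ range n | a k < M} : ℝ) ≤ logb 2 M + 1 := by
  refine h.card_le_of_rescale (J := fun u v => 2 * u < v ∧ u < M)
    (fun _ _ _ h' hJ => h'.length_le_logb (fun k hk => (hJ k hk).1) hM (fun k hk => (hJ k hk).2))
    one_pos _ fun k hk => ?_
  obtain ⟨hkn, hkM⟩ := mem_filter.1 hk
  have hkn := mem_range.1 hkn
  have hab := h.1 k hkn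
  simp only [mul_one]
  exact ⟨hkn, hab.1, two_mul_lt_of_jump hpos hmono hΔ hΔC (by linarith) hx hab.2.le (hjump k hkn),
    hkM⟩

lemma card_filter_le_mul_of_pow_jumps (hpos : ∀ s, 0 < s → 0 < F s) {C N ξ : ℝ} {m : ℕ}
    (hm : m ≠ 0) (hξ : 0 < ξ) (hξ1 : ξ ≤ 1)
    (hN : ∀ n' a' b', OrlChain a' b' n' → (∀ k < n', C * Ft F (a' k) ξ ≤ Ft F (b' k) ξ) →
      (n' : ℝ) ≤ N)
    {n : ℕ} {a b : ℕ → ℝ} (h : OrlChain a b n)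
    (hjump : ∀ k < n, C ^ m * Ft F (a k) (ξ ^ m) ≤ Ft F (b k) (ξ ^ m)) :
    (#{k ∈ range n | (ξ ^ m)⁻¹ ≤ a k} : ℝ) ≤ m * N := by
  have ha : ∀ k < n, 0 < a k := fun k hk => zero_lt_one.trans_le (h.1 k hk).1
  set S : ℕ → Finset ℕ := fun j =>
    {k ∈ range n | (ξ ^ m)⁻¹ ≤ a k ∧ C * Ft F (a k * ξ ^ j) ξ ≤ Ft F (b k * ξ ^ j) ξ}
  have hcover : {k ∈ range n | (ξ ^ m)⁻¹ ≤ a k} ⊆ (range m).biUnion S := fun k hk => by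
    obtain ⟨hkn, hkx⟩ := mem_filter.1 hk
    have hkn := mem_range.1 hkn
    obtain ⟨j, hj, hJ⟩ := exists_Ft_jump_of_pow hpos hm (ha k hkn)
      ((ha k hkn).trans (h.1 k hkn).2) hξ (hjump k hkn)
    exact mem_biUnion.2 ⟨j, mem_range.2 hj, mem_filter.2 ⟨mem_range.2 hkn, hkx, hJ⟩⟩
  have hS : ∀ j < m, (#(S j) : ℝ) ≤ N := fun j hj =>
    h.card_le_of_rescale (J := fun u v => C * Ft F u ξ ≤ Ft F v ξ) hN (pow_pos hξ j) _
      fun k hk => by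
        obtain ⟨hkn, hkx, hkJ⟩ := mem_filter.1 hk
        refine ⟨mem_range.1 hkn, ?_, hkJ⟩
        calc (1 : ℝ) = (ξ ^ m)⁻¹ * ξ ^ m := (inv_mul_cancel₀ (pow_pos hξ m).ne').symm
          _ ≤ a k * ξ ^ j := mul_le_mul hkx (pow_le_pow_of_le_one hξ.le hξ1 hj.le)
            (pow_pos hξ m).le (ha k (mem_range.1 hkn)).le
  calc (#{k ∈ range n | (ξ ^ m)⁻¹ ≤ a k} : ℝ) ≤ ∑ j ∈ range m, (#(S j) : ℝ) := by
        exact_mod_cast (Finset.card_le_card hcover).trans card_biUnion_le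
    _ ≤ m * N := by simpa using sum_le_card_nsmul _ _ _ fun j hj => hS j (mem_range.1 hj)

theorem card_le_of_pow_jumps (hpos : ∀ s, 0 < s → 0 < F s) (hmono : MonotoneOn F (Ici 0))
    {Δ : ℝ} (hΔ : ∀ x ≥ (0 : ℝ), F (2 * x) ≤ Δ * F x)
    {C N ξ : ℝ} {m : ℕ} (hm : m ≠ 0) (hΔC : Δ < C ^ m) (hξ : 0 < ξ) (hξ1 : ξ ≤ 1)
    (hN : ∀ n' a' b', OrlChain a' b' n' → (∀ k < n', C * Ft F (a' k) ξ ≤ Ft F (b' k) ξ) →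
      (n' : ℝ) ≤ N)
    {n : ℕ} {a b : ℕ → ℝ} (h : OrlChain a b n)
    (hjump : ∀ k < n, C ^ m * Ft F (a k) (ξ ^ m) ≤ Ft F (b k) (ξ ^ m)) :
    (n : ℝ) ≤ m * N + logb 2 (ξ ^ m)⁻¹ + 1 := by
  have hsmall := card_filter_lt_le_logb hpos hmono hΔ hΔC (pow_pos hξ m)
    (one_le_inv₀ (pow_pos hξ m) |>.2 (pow_le_one₀ hξ.le hξ1)) h hjump
  have hlarge := card_filter_le_mul_of_pow_jumps hpos hm hξ hξ1 hN h hjump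
  have hsplit : #{k ∈ range n | a k < (ξ ^ m)⁻¹} + #{k ∈ range n | (ξ ^ m)⁻¹ ≤ a k} = n := by
    simpa only [not_lt, card_range] using
      card_filter_add_card_filter_not (s := range n) (a · < (ξ ^ m)⁻¹)
  rw [← hsplit, Nat.cast_add]
  linarith

end Jumps

lemma mul_rpow_neg_add_logb_inv_add_one_le {x A α β : ℝ} (hx : 0 < x) (hx1 : x ≤ 1) (hA : 0 ≤ A)
    (hα : 0 < α) (hβα : β ≤ α) :
    A * x ^ (-β) + logb 2 x⁻¹ + 1 ≤ (A + 1 / (α * log 2) + 1) * x ^ (-α) := by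
  have hβ : x ^ (-β) ≤ x ^ (-α) := rpow_le_rpow_of_exponent_ge hx hx1 (neg_le_neg hβα)
  have hone : 1 ≤ x ^ (-α) := by
    simpa using rpow_le_rpow_of_exponent_ge hx hx1 (neg_nonpos.2 hα.le)
  have hlog : logb 2 x⁻¹ ≤ x ^ (-α) / α / log 2 := by
    refine div_le_div_of_nonneg_right ?_ (log_pos one_lt_two).le
    simpa [inv_rpow hx.le, rpow_neg hx.le] using log_le_rpow_div (inv_nonneg.2 hx.le) hα
  calc A * x ^ (-β) + logb 2 x⁻¹ + 1 ≤ A * x ^ (-α) + x ^ (-α) / α / log 2 + x ^ (-α) := by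
        gcongr
    _ = (A + 1 / (α * log 2) + 1) * x ^ (-α) := by field_simp

theorem jump_count_bootstrap_general
    (F : ℝ → ℝ) (hF0 : F 0 = 0)
    (hmono : StrictMonoOn F (Ici 0))
    (Δ : ℝ) (hΔ : ∀ x ≥ (0 : ℝ), F (2 * x) ≤ Δ * F x)
    (C₂ C₃ r : ℝ) (hC₂ : Δ < C₂) (hC₃ : 1 < C₃) (hr : 0 < r)
    (hcount : ∀ x ∈ Ioc (0 : ℝ) 1, ∀ (n : ℕ) (a b : ℕ → ℝ), OrlChain a b n →
      (∀ k < n, C₂ * Ft F (a k) x ≤ Ft F (b k) x) → (n : ℝ) ≤ C₃ * x ^ (-r)) :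
    ∀ m : ℕ, r < (m : ℝ) →
      ∃ C₆ > (0 : ℝ), ∃ α : ℝ, 0 < α ∧ α < 1 ∧
        ∀ x ∈ Ioc (0 : ℝ) 1, ∀ (n : ℕ) (a b : ℕ → ℝ), OrlChain a b n →
          (∀ k < n, C₂ ^ m * Ft F (a k) x ≤ Ft F (b k) x) →
          (n : ℝ) ≤ C₆ * x ^ (-α) := by
  intro m hm
  have hpos : ∀ s, 0 < s → 0 < F s := fun s => pos_of_strictMonoOn hF0 hmono
  have hmR : (0 : ℝ) < m := hr.trans hm
  have hm0 : m ≠ 0 := by exact_mod_cast hmR.ne'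
  have hΔC : Δ < C₂ ^ m :=
    hC₂.trans_le (le_self_pow₀ ((one_lt_of_doubling hpos hmono hΔ).trans hC₂).le hm0)
  have hrm : 0 < r / m ∧ r / m < 1 := ⟨div_pos hr hmR, (div_lt_one hmR).2 hm⟩
  have hA : 0 ≤ m * C₃ := mul_nonneg hmR.le (by linarith)
  set α := (r / m + 1) / 2 with hα
  have hα0 : 0 < α := by linarith
  refine ⟨m * C₃ + 1 / (α * log 2) + 1, by positivity, α, hα0, by linarith, ?_⟩
  rintro x ⟨hx, hx1⟩ n a b h hjump
  set ξ := x ^ (m : ℝ)⁻¹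
  have hξm : ξ ^ m = x := rpow_inv_natCast_pow hx.le hm0
  have hξ : 0 < ξ := by positivity
  have hξ1 : ξ ≤ 1 := rpow_le_one hx.le hx1 (by positivity)
  have hξr : ξ ^ (-r) = x ^ (-(r / m)) := by rw [← rpow_mul hx.le]; ring_nf
  have hn := card_le_of_pow_jumps hpos hmono.monotoneOn hΔ hm0 hΔC hξ hξ1 (hcount ξ ⟨hξ, hξ1⟩) h
    (hξm ▸ hjump)
  rw [hξm, hξr, ← mul_assoc] at hn
  exact hn.trans (mul_rpow_neg_add_logb_inv_add_one_le hx hx1 hA hα0 (by linarith))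

/-- Bootstrapping of jump counts: if the number of jumps `F_{b_k}(x) ≥ C₂ F_{a_k}(x)`
is at most `C₃ x^{−r}`, then for every integer `m > r` the number of jumps of size
`C₂^m` is at most `C₆ x^{−α}` for some `0 < α < 1`. -/
theorem jump_count_bootstrap
    (F : ℝ → ℝ) (hF0 : F 0 = 0)
    (hmono : StrictMonoOn F (Ici 0)) (hcont : ContinuousOn F (Ici 0))
    (hconv : ConvexOn ℝ (Ici 0) F)
    (Δ : ℝ) (hΔ : ∀ x ≥ (0 : ℝ), F (2 * x) ≤ Δ * F x)
    (C₂ C₃ r : ℝ) (hC₂ : Δ < C₂) (hC₃ : 1 < C₃) (hr : 0 < r)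
    (hcount : ∀ x ∈ Ioc (0 : ℝ) 1, ∀ (n : ℕ) (a b : ℕ → ℝ), OrlChain a b n →
      (∀ k < n, C₂ * Ft F (a k) x ≤ Ft F (b k) x) → (n : ℝ) ≤ C₃ * x ^ (-r)) :
    ∀ m : ℕ, r < (m : ℝ) →
      ∃ C₆ > (0 : ℝ), ∃ α : ℝ, 0 < α ∧ α < 1 ∧
        ∀ x ∈ Ioc (0 : ℝ) 1, ∀ (n : ℕ) (a b : ℕ → ℝ), OrlChain a b n →
          (∀ k < n, C₂ ^ m * Ft F (a k) x ≤ Ft F (b k) x) →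
          (n : ℝ) ≤ C₆ * x ^ (-α) :=
  jump_count_bootstrap_general F hF0 hmono Δ hΔ C₂ C₃ r hC₂ hC₃ hr hcount
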